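/- arXiv:2501.14253 — 4 statements merged into one kernel-verified Lean document; each statement's English description precedes it below -/
import Mathlib

section
/- Let f : ℝ^n → ℝ and g : ℝ^d → ℝ be convex functions (everywhere finite), and let A be a real n×d matrix. Define the convex conjugates f*(u) = sup_{ψ∈ℝ^n} (u·ψ − f(ψ)) and g*(φ) = sup_{p∈ℝ^d} (φ·p − g(p)), taking values in ℝ ∪ {+∞}. Then, as an equality in the extended reals, inf_{p∈ℝ^d} [f(Ap) + g(p)] = sup_{u∈ℝ^n} [−f*(−u) − g*(Aᵀu)]. -/
/-!
Write the dual objective at `u` as the infimum over `(y, p)` of the Lagrangian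
`f y + g p + u ⬝ᵥ (y - A p)` of the problem `min f y + g p` subject to `y = A p`; taking
`y = A p` gives weak duality. For the converse, a real lower bound `m` of the primal value puts
`(0, m)` outside the strict epigraph `C` of the perturbation function
`x ↦ inf_p f (A p + x) + g p`. In finite dimension `f` is continuous, so `C` is open and convex,
and Hahn–Banach separates it from `(0, m)`. The separating hyperplane is not vertical because
`C` is unbounded above, so it is the graph of an affine function whose slope is a Lagrange
multiplier `u`.
-/

/-- The convex conjugate of `h : ℝ^m → ℝ`, valued in the extended reals:
`h*(u) = sup_p (u·p − h(p))`. -/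
noncomputable def fenchelConj {m : ℕ} (h : (Fin m → ℝ) → ℝ) : (Fin m → ℝ) → EReal :=
  fun u => ⨆ p : Fin m → ℝ, ((∑ i, u i * p i - h p : ℝ) : EReal)

open Set Matrix

namespace EReal

variable {ι κ : Sort*}

theorem neg_iSup (a : ι → EReal) : -(⨆ i, a i) = ⨅ i, -a i :=
  negOrderIso.map_iSup a

theorem iSup_add_iSup (a : ι → EReal) (b : κ → EReal) :
    (⨆ i, a i) + ⨆ j, b j = ⨆ i, ⨆ j, a i + b j := by
  refine le_antisymm (add_le_of_forall_lt fun a' ha' b' hb' => ?_)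
    (iSup₂_le fun i j => add_le_add (le_iSup a i) (le_iSup b j))
  obtain ⟨i, hi⟩ := lt_iSup_iff.1 ha'
  obtain ⟨j, hj⟩ := lt_iSup_iff.1 hb'
  exact (add_le_add hi.le hj.le).trans (le_iSup₂_of_le i j le_rfl)

end EReal

section Separation

variable {E : Type*} [TopologicalSpace E] [AddCommGroup E] [IsTopologicalAddGroup E]
  [Module ℝ E] [ContinuousSMul ℝ E]

theorem exists_nonvertical_separation {C : Set (E × ℝ)} (hCo : IsOpen C) (hCc : Convex ℝ C)
    (hC_up : ∀ x t t', (x, t) ∈ C → t ≤ t' → (x, t') ∈ C) {x₀ : E} {m : ℝ}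
    (hx₀ : ∃ t, (x₀, t) ∈ C) (hm : (x₀, m) ∉ C) :
    ∃ L : StrongDual ℝ E, ∀ x t, (x, t) ∈ C → m + L (x - x₀) < t := by
  obtain ⟨ℓ, hℓ⟩ := geometric_hahn_banach_open_point hCc hCo hm
  set c := ℓ (0, 1)
  have hsplit : ∀ x t, ℓ (x, t) = ℓ (x, 0) + t * c := fun x t => by
    rw [← smul_eq_mul, ← map_smul, ← map_add, Prod.smul_mk, smul_zero, smul_eq_mul, mul_one,
      Prod.mk_add_mk, add_zero, zero_add]
  have hc : c < 0 := by
    obtain ⟨t₀, ht₀⟩ := hx₀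
    have := hℓ _ (hC_up _ _ _ ht₀ (le_max_left t₀ m))
    rw [hsplit, hsplit x₀ m] at this
    nlinarith [le_max_right t₀ m]
  refine ⟨(-c)⁻¹ • ℓ.comp (ContinuousLinearMap.inl ℝ E ℝ), fun x t hxt => ?_⟩
  have := hℓ _ hxt
  rw [hsplit, hsplit x₀] at this
  have hdiff : (-c)⁻¹ * (ℓ (x, 0) - ℓ (x₀, 0)) < t - m := by
    rw [inv_mul_lt_iff₀ (neg_pos.2 hc)]; linarith
  change m + (-c)⁻¹ * ℓ (x - x₀, 0) < t
  rw [← sub_zero (0 : ℝ), ← Prod.mk_sub_mk, map_sub]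
  linarith

end Separation

theorem convex_setOf_exists_lt {E P : Type*} [AddCommGroup E] [Module ℝ E] [AddCommGroup P]
    [Module ℝ P] {F : E × P → ℝ} (hF : ConvexOn ℝ univ F) :
    Convex ℝ {q : E × ℝ | ∃ p, F (q.1, p) < q.2} := by
  have : {q : E × ℝ | ∃ p, F (q.1, p) < q.2} =
      (LinearMap.prodMap (LinearMap.fst ℝ E P) LinearMap.id) '' {q | q.1 ∈ univ ∧ F q.1 < q.2} := by
    ext ⟨x, t⟩
    simp
  rw [this]
  exact hF.convex_strict_epigraph.linear_image _

theorem exists_lagrange_multiplier {E P : Type*} [NormedAddCommGroup E] [NormedSpace ℝ E]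
    [FiniteDimensional ℝ E] [AddCommGroup P] [Module ℝ P] {f : E → ℝ} {g : P → ℝ}
    (hf : ConvexOn ℝ univ f) (hg : ConvexOn ℝ univ g) (A : P →ₗ[ℝ] E) {m : ℝ}
    (hm : ∀ p, m ≤ f (A p) + g p) :
    ∃ L : StrongDual ℝ E, ∀ y p, m ≤ f y + g p + L (y - A p) := by
  -- the strict epigraph of the perturbation function `x ↦ inf_p f (A p + x) + g p`
  set C := {q : E × ℝ | ∃ p, f (A p + q.1) + g p < q.2}
  have hCo : IsOpen C := by
    have hfc : Continuous f := hf.locallyLipschitz.continuous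
    simp only [C, ofPred_exists]
    exact isOpen_iUnion fun p => isOpen_lt (by fun_prop) continuous_snd
  have hCc : Convex ℝ C := convex_setOf_exists_lt
    ((hf.comp_linearMap (A ∘ₗ LinearMap.snd ℝ E P + LinearMap.fst ℝ E P)).add
      (hg.comp_linearMap (LinearMap.snd ℝ E P)))
  have hC_up : ∀ x t t', (x, t) ∈ C → t ≤ t' → (x, t') ∈ C :=
    fun _ _ _ ⟨p, hp⟩ htt' => ⟨p, hp.trans_le htt'⟩
  have h0 : ((0 : E), f 0 + g 0 + 1) ∈ C := ⟨0, by simp⟩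
  have hm0 : ((0 : E), m) ∉ C := fun ⟨p, hp⟩ => by
    have := hm p
    simp only [add_zero] at hp
    linarith
  obtain ⟨L, hL⟩ := exists_nonvertical_separation hCo hCc hC_up ⟨_, h0⟩ hm0
  refine ⟨-L, fun y p => le_of_forall_pos_lt_add fun ε hε => ?_⟩
  have := hL (y - A p) (f y + g p + ε) ⟨p, by simpa using hε⟩
  simp only [sub_zero, _root_.neg_apply] at this ⊢
  linarith

theorem fenchelConj_apply {m : ℕ} (h : (Fin m → ℝ) → ℝ) (u : Fin m → ℝ) :
    fenchelConj h u = ⨆ p, ((u ⬝ᵥ p - h p : ℝ) : EReal) :=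
  rfl

theorem fenchelConj_ne_bot {m : ℕ} (h : (Fin m → ℝ) → ℝ) (u : Fin m → ℝ) : fenchelConj h u ≠ ⊥ :=
  ne_bot_of_le_ne_bot (EReal.coe_ne_bot _) (le_iSup (fun p => ((u ⬝ᵥ p - h p : ℝ) : EReal)) 0)

theorem neg_fenchelConj_neg_sub_fenchelConj {n d : ℕ} (f : (Fin n → ℝ) → ℝ)
    (g : (Fin d → ℝ) → ℝ) (A : Matrix (Fin n) (Fin d) ℝ) (u : Fin n → ℝ) :
    -fenchelConj f (-u) - fenchelConj g (Aᵀ *ᵥ u) =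
      ⨅ (y) (p), ((f y + g p + u ⬝ᵥ (y - A *ᵥ p) : ℝ) : EReal) := by
  rw [← EReal.neg_add (.inl (fenchelConj_ne_bot _ _)) (.inr (fenchelConj_ne_bot _ _)),
    fenchelConj_apply, fenchelConj_apply, EReal.iSup_add_iSup, EReal.neg_iSup]
  refine iInf_congr fun y => ?_
  rw [EReal.neg_iSup]
  refine iInf_congr fun p => ?_
  rw [← EReal.coe_add, ← EReal.coe_neg, mulVec_transpose, ← dotProduct_mulVec]
  simp only [neg_dotProduct, dotProduct_sub]
  ring_nf

theorem exists_dotProduct_eq {ι R : Type*} [CommSemiring R] [Fintype ι] [DecidableEq ι]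
    (L : (ι → R) →ₗ[R] R) : ∃ u, ∀ x, L x = u ⬝ᵥ x :=
  ⟨(dotProductEquiv R ι).symm L, fun x =>
    (LinearMap.congr_fun ((dotProductEquiv R ι).apply_symm_apply L) x).symm⟩

/-- Fenchel's duality theorem, everywhere-finite convex case:
for convex `f : ℝ^n → ℝ`, convex `g : ℝ^d → ℝ` and a matrix `A ∈ ℝ^{n×d}`,
`inf_p [f(Ap) + g(p)] = sup_u [−f*(−u) − g*(Aᵀu)]` as an equality in the
extended reals. -/
theorem fenchel_duality {n d : ℕ} (f : (Fin n → ℝ) → ℝ) (g : (Fin d → ℝ) → ℝ)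
    (hf : ConvexOn ℝ Set.univ f) (hg : ConvexOn ℝ Set.univ g)
    (A : Matrix (Fin n) (Fin d) ℝ) :
    (⨅ p : Fin d → ℝ, ((f (A.mulVec p) + g p : ℝ) : EReal)) =
      ⨆ u : Fin n → ℝ, (-(fenchelConj f (-u)) - fenchelConj g (A.transpose.mulVec u)) := by
  simp_rw [neg_fenchelConj_neg_sub_fenchelConj]
  refine le_antisymm (EReal.ge_of_forall_gt_iff_ge.1 fun z hz => ?_)
    (iSup_le fun u => le_iInf fun p => (iInf₂_le (A *ᵥ p) p).trans_eq (by simp))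
  have hzp : ∀ p, z ≤ f (A.mulVecLin p) + g p := fun p =>
    EReal.coe_le_coe_iff.1 (hz.le.trans (iInf_le _ p))
  obtain ⟨L, hL⟩ := exists_lagrange_multiplier hf hg A.mulVecLin hzp
  obtain ⟨u, hu⟩ := exists_dotProduct_eq L.toLinearMap
  refine le_iSup_of_le u (le_iInf₂ fun y p => EReal.coe_le_coe_iff.2 ?_)
  simpa [← hu] using hL y p
end

section
/- Sandwich bounds on the weighted validation error via a parameter ball: in the validation setup, let B ⊆ ℝ^k be a set of parameter vectors and let β ∈ B. Define n_sc = Σ_i w'_i · I[for all β′ ∈ B, y'_i ⟨β′, φ(x'_i)⟩ > 0] and n_si = Σ_i w'_i · I[for all β′ ∈ B, y'_i ⟨β′, φ(x'_i)⟩ < 0]. Then n_si / (Σ_i w'_i) ≤ VaEr(β; w') ≤ (Σ_i w'_i − n_sc) / (Σ_i w'_i). -/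
open scoped RealInnerProductSpace Classical

namespace Finset

variable {ι R : Type*} [Ring R]

theorem sum_mul_boole_le_sum_mul_boole [PartialOrder R] [IsOrderedRing R]
    (s : Finset ι) {w : ι → R} (hw : ∀ i ∈ s, 0 ≤ w i)
    {P Q : ι → Prop} [DecidablePred P] [DecidablePred Q] (hPQ : ∀ i ∈ s, P i → Q i) :
    ∑ i ∈ s, w i * (if P i then 1 else 0) ≤ ∑ i ∈ s, w i * (if Q i then 1 else 0) :=
  sum_le_sum fun i hi =>
    mul_le_mul_of_nonneg_left (by split_ifs <;> simp_all) (hw i hi)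

theorem sum_sub_sum_mul_boole (s : Finset ι) (w : ι → R) (P : ι → Prop) [DecidablePred P] :
    ∑ i ∈ s, w i - ∑ i ∈ s, w i * (if P i then 1 else 0)
      = ∑ i ∈ s, w i * (if ¬P i then 1 else 0) := by
  rw [← sum_sub_distrib]
  refine sum_congr rfl fun i _ => ?_
  split_ifs <;> simp

end Finset

theorem validation_error_sandwich_general {n' d k : ℕ}
    (x' : Fin n' → Fin d → ℝ) (y' : Fin n' → ℝ)
    (φ : (Fin d → ℝ) → EuclideanSpace ℝ (Fin k))
    (w' : Fin n' → ℝ) (hw : ∀ i, 0 ≤ w' i)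
    (B : Set (EuclideanSpace ℝ (Fin k)))
    (β : EuclideanSpace ℝ (Fin k)) (hβ : β ∈ B) :
    (∑ i, w' i * (if ∀ β' ∈ B, y' i * ⟪β', φ (x' i)⟫ < 0 then (1 : ℝ) else 0))
        / (∑ i, w' i)
      ≤ (∑ i, w' i * (if y' i * ⟪β, φ (x' i)⟫ ≤ 0 then (1 : ℝ) else 0)) / (∑ i, w' i) ∧
    (∑ i, w' i * (if y' i * ⟪β, φ (x' i)⟫ ≤ 0 then (1 : ℝ) else 0)) / (∑ i, w' i)
      ≤ ((∑ i, w' i)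
          - ∑ i, w' i * (if ∀ β' ∈ B, 0 < y' i * ⟪β', φ (x' i)⟫ then (1 : ℝ) else 0))
        / (∑ i, w' i) := by
  have hW : 0 ≤ ∑ i, w' i := Finset.sum_nonneg fun i _ => hw i
  refine ⟨div_le_div_of_nonneg_right ?_ hW, div_le_div_of_nonneg_right ?_ hW⟩
  · exact Finset.sum_mul_boole_le_sum_mul_boole _ (fun i _ => hw i)
      fun i _ hsurelyWrong => (hsurelyWrong β hβ).le
  · rw [Finset.sum_sub_sum_mul_boole]
    exact Finset.sum_mul_boole_le_sum_mul_boole _ (fun i _ => hw i)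
      fun i _ hwrong hsurelyRight => hwrong.not_gt (hsurelyRight β hβ)

/-- sandwich bounds on the weighted validation error via a
parameter ball: in the validation setup, for a set `B ⊆ ℝ^k` of parameter
vectors containing `β`, with
`n_sc = Σ_i w'_i · I[∀ β' ∈ B, y'_i ⟨β', φ(x'_i)⟩ > 0]` and
`n_si = Σ_i w'_i · I[∀ β' ∈ B, y'_i ⟨β', φ(x'_i)⟩ < 0]`, one has
`n_si / Σ_i w'_i ≤ VaEr(β; w') ≤ (Σ_i w'_i − n_sc) / Σ_i w'_i`. -/
theorem validation_error_sandwich {n' d k : ℕ}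
    (x' : Fin n' → Fin d → ℝ) (y' : Fin n' → ℝ) (hy : ∀ i, y' i = 1 ∨ y' i = -1)
    (φ : (Fin d → ℝ) → EuclideanSpace ℝ (Fin k))
    (w' : Fin n' → ℝ) (hw : ∀ i, 0 ≤ w' i) (hW : 0 < ∑ i, w' i)
    (B : Set (EuclideanSpace ℝ (Fin k)))
    (β : EuclideanSpace ℝ (Fin k)) (hβ : β ∈ B) :
    (∑ i, w' i * (if ∀ β' ∈ B, y' i * ⟪β', φ (x' i)⟫ < 0 then (1 : ℝ) else 0))
        / (∑ i, w' i)
      ≤ (∑ i, w' i * (if y' i * ⟪β, φ (x' i)⟫ ≤ 0 then (1 : ℝ) else 0)) / (∑ i, w' i) ∧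
    (∑ i, w' i * (if y' i * ⟪β, φ (x' i)⟫ ≤ 0 then (1 : ℝ) else 0)) / (∑ i, w' i)
      ≤ ((∑ i, w' i)
          - ∑ i, w' i * (if ∀ β' ∈ B, 0 < y' i * ⟪β', φ (x' i)⟫ then (1 : ℝ) else 0))
        / (∑ i, w' i) :=
  validation_error_sandwich_general x' y' φ w' hw B β hβ
end

section
/- Minimization of a binary score sum over a weight sphere intersected with a sum constraint: let n' ≥ 1, ζ ∈ {0,1}^{n'}, Q > 0, and let m = Σ_i ζ_i. Then the infimum of ζ·w' over the set {w' ∈ ℝ^{n'} : ‖w' − 1_{n'}‖₂ ≤ Q and Σ_i w'_i = n'} equals m − Q √(m − m²/n'), and this infimum is attained. -/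
/-!
Write `v := ζ - (m/n') • 1` for the projection of `ζ` onto the hyperplane `1ᗮ`, the direction
space of the constraint `∑ w'ᵢ = n'`. On that constraint `ζ·w' = m + ⟪v, w' - 1⟫`, so by
Cauchy–Schwarz the minimum over the ball is `m - Q‖v‖`, attained at `w' = 1 - (Q/‖v‖) • v`.
Since `ζ` is binary, `‖ζ‖² = m`, which gives `‖v‖² = m - m²/n'`.
-/

/-- The all-ones vector in `ℝ^n` (as a Euclidean space). -/
noncomputable def onesVec (n : ℕ) : EuclideanSpace ℝ (Fin n) := WithLp.toLp 2 (fun _ => 1)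

open scoped RealInnerProductSpace

theorem isLeast_inner_image_ball_inter_coset {E : Type*} [NormedAddCommGroup E]
    [InnerProductSpace ℝ E] (K : Submodule ℝ E) {c v : E} (hvK : v ∈ K)
    (hcv : ∀ x ∈ K, ⟪c, x⟫ = ⟪v, x⟫) (p : E) {Q : ℝ} (hQ : 0 ≤ Q) :
    IsLeast ((fun w => ⟪c, w⟫) '' {w | w - p ∈ K ∧ ‖w - p‖ ≤ Q}) (⟪c, p⟫ - Q * ‖v‖) := by
  constructor
  · refine ⟨p - (Q / ‖v‖) • v, ⟨?_, ?_⟩, ?_⟩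
    · simpa using K.smul_mem (Q / ‖v‖) hvK
    · rcases eq_or_ne v 0 with rfl | hv
      · simpa using hQ
      · rw [sub_sub_cancel_left, norm_neg, norm_smul, Real.norm_eq_abs,
          abs_of_nonneg (by positivity), div_mul_cancel₀ _ (norm_ne_zero_iff.mpr hv)]
    · rcases eq_or_ne v 0 with rfl | hv
      · simp
      · simp only [inner_sub_right, real_inner_smul_right, hcv v hvK, real_inner_self_eq_norm_sq]
        field_simp
  · rintro _ ⟨w, ⟨hwK, hwQ⟩, rfl⟩
    have hcs : -(‖v‖ * ‖w - p‖) ≤ ⟪v, w - p⟫ := neg_le_of_abs_le (abs_real_inner_le_norm v (w - p))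
    calc ⟪c, p⟫ - Q * ‖v‖ ≤ ⟪c, p⟫ - ‖v‖ * ‖w - p‖ := by nlinarith [norm_nonneg v]
      _ ≤ ⟪c, p⟫ + ⟪v, w - p⟫ := by linarith
      _ = ⟪c, w⟫ := by rw [← hcv _ hwK, inner_sub_right]; ring

theorem EuclideanSpace.inner_eq_sum_mul {ι : Type*} [Fintype ι] (x y : EuclideanSpace ℝ ι) :
    ⟪x, y⟫ = ∑ i, x i * y i := by
  simp [PiLp.inner_apply, mul_comm]

theorem EuclideanSpace.norm_sq_eq_sum_of_binary {ι : Type*} [Fintype ι] {ζ : EuclideanSpace ℝ ι}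
    (hζ : ∀ i, ζ i = 0 ∨ ζ i = 1) : ‖ζ‖ ^ 2 = ∑ i, ζ i := by
  rw [← real_inner_self_eq_norm_sq, EuclideanSpace.inner_eq_sum_mul]
  refine Finset.sum_congr rfl fun i _ => ?_
  rcases hζ i with h | h <;> simp [h]

theorem inner_onesVec_left {n : ℕ} (x : EuclideanSpace ℝ (Fin n)) :
    ⟪onesVec n, x⟫ = ∑ i, x i := by
  simp [EuclideanSpace.inner_eq_sum_mul, onesVec]

theorem norm_onesVec_sq (n : ℕ) : ‖onesVec n‖ ^ 2 = n := by
  rw [← real_inner_self_eq_norm_sq, inner_onesVec_left]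
  simp [onesVec]

theorem sub_onesVec_mem_orthogonal_iff {n : ℕ} (w : EuclideanSpace ℝ (Fin n)) :
    w - onesVec n ∈ (ℝ ∙ onesVec n)ᗮ ↔ ∑ i, w i = n := by
  rw [Submodule.mem_orthogonal_singleton_iff_inner_right, inner_sub_right, inner_onesVec_left,
    real_inner_self_eq_norm_sq, norm_onesVec_sq, sub_eq_zero]

theorem norm_sub_mean_smul_onesVec_sq_of_binary {n : ℕ} (hn : (n : ℝ) ≠ 0)
    {ζ : EuclideanSpace ℝ (Fin n)} (hζ : ∀ i, ζ i = 0 ∨ ζ i = 1) {m : ℝ} (hm : m = ∑ i, ζ i) :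
    ‖ζ - (m / n) • onesVec n‖ ^ 2 = m - m ^ 2 / n := by
  rw [norm_sub_sq_real, real_inner_smul_right, real_inner_comm, inner_onesVec_left, ← hm,
    norm_smul, mul_pow, Real.norm_eq_abs, sq_abs, norm_onesVec_sq,
    EuclideanSpace.norm_sq_eq_sum_of_binary hζ, ← hm]
  field_simp
  ring

/-- minimization of a binary score sum over a weight sphere with a
sum constraint: for `n' ≥ 1`, `ζ ∈ {0,1}^{n'}`, `Q > 0` and `m = Σ_i ζ_i`, the
infimum of `ζ·w'` over `{w' : ‖w' − 1‖₂ ≤ Q ∧ Σ_i w'_i = n'}` equals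
`m − Q √(m − m²/n')`, and it is attained. -/
theorem binary_score_min_over_sphere {n' : ℕ} (hn : 1 ≤ n')
    (ζ : EuclideanSpace ℝ (Fin n')) (hζ : ∀ i, ζ i = 0 ∨ ζ i = 1)
    (Q : ℝ) (hQ : 0 < Q) (m : ℝ) (hm : m = ∑ i, ζ i) :
    IsLeast ((fun w' : EuclideanSpace ℝ (Fin n') => ∑ i, ζ i * w' i) ''
        {w' | ‖w' - onesVec n'‖ ≤ Q ∧ ∑ i, w' i = (n' : ℝ)})
      (m - Q * Real.sqrt (m - m ^ 2 / (n' : ℝ))) := by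
  have hn0 : (n' : ℝ) ≠ 0 := Nat.cast_ne_zero.mpr (by omega)
  set K := (ℝ ∙ onesVec n')ᗮ
  set v := ζ - (m / n') • onesVec n'
  have hζ1 : ⟪ζ, onesVec n'⟫ = m := by rw [real_inner_comm, inner_onesVec_left, hm]
  have hvK : v ∈ K := by
    rw [Submodule.mem_orthogonal_singleton_iff_inner_right, inner_sub_right, real_inner_comm, hζ1,
      real_inner_smul_right, real_inner_self_eq_norm_sq, norm_onesVec_sq, div_mul_cancel₀ _ hn0,
      sub_self]
  have hcv : ∀ x ∈ K, ⟪ζ, x⟫ = ⟪v, x⟫ := fun x hx => by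
    rw [Submodule.mem_orthogonal_singleton_iff_inner_right] at hx
    rw [inner_sub_left, real_inner_smul_left, hx, mul_zero, sub_zero]
  have hv : ‖v‖ = √(m - m ^ 2 / n') := by
    rw [← norm_sub_mean_smul_onesVec_sq_of_binary hn0 hζ hm, Real.sqrt_sq (norm_nonneg v)]
  have hset : {w' : EuclideanSpace ℝ (Fin n') | ‖w' - onesVec n'‖ ≤ Q ∧ ∑ i, w' i = n'} =
      {w' | w' - onesVec n' ∈ K ∧ ‖w' - onesVec n'‖ ≤ Q} := by
    ext w'
    exact and_comm.trans (and_congr_left' (sub_onesVec_mem_orthogonal_iff w').symm)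
  have hobj : (fun w' : EuclideanSpace ℝ (Fin n') => ∑ i, ζ i * w' i) = (⟪ζ, ·⟫) :=
    funext fun w' => (EuclideanSpace.inner_eq_sum_mul ζ w').symm
  rw [hset, hobj, ← hv, ← hζ1]
  exact isLeast_inner_image_ball_inter_coset K hvK hcv (onesVec n') hQ.le
end

section
/- Validation error bound from a parameter ball via the surely-correct indicator: in the validation setup, assume additionally that Σ_i w'_i = n'. Let β₀ ∈ ℝ^k, R ≥ 0, and let β ∈ ℝ^k satisfy ‖β − β₀‖ ≤ R. Define ζ ∈ {0,1}^{n'} by ζ_i = I[y'_i ⟨β₀, φ(x'_i)⟩ − ‖φ(x'_i)‖ R > 0]. Then VaEr(β; w') ≤ 1 − (Σ_i ζ_i w'_i)/n'. -/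
/-!
By Cauchy–Schwarz, `|⟪β - β₀, φ x⟫| ≤ R ‖φ x‖` on the ball, so a validation point with `ζ_i = 1`
is classified correctly by every `β` in it. The weighted error is therefore at most the weight of
the points with `ζ_i = 0`, which is `n' - ∑ ζ_i w'_i`.
-/

open scoped RealInnerProductSpace Classical

open Finset

theorem mul_inner_pos_of_norm_sub_le {E : Type*} [NormedAddCommGroup E] [InnerProductSpace ℝ E]
    {y R : ℝ} {β β₀ v : E} (hy : |y| ≤ 1) (hβ : ‖β - β₀‖ ≤ R)
    (hmargin : 0 < y * ⟪β₀, v⟫ - ‖v‖ * R) : 0 < y * ⟪β, v⟫ := by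
  have hdev : |y * ⟪β - β₀, v⟫| ≤ ‖v‖ * R :=
    calc |y * ⟪β - β₀, v⟫| = |y| * |⟪β - β₀, v⟫| := abs_mul _ _
      _ ≤ 1 * (‖β - β₀‖ * ‖v‖) := by
        gcongr
        exact abs_real_inner_le_norm _ _
      _ ≤ ‖v‖ * R := by nlinarith [norm_nonneg v]
  have hsplit : y * ⟪β, v⟫ = y * ⟪β₀, v⟫ + y * ⟪β - β₀, v⟫ := by
    rw [inner_sub_left]; ring
  linarith [neg_abs_le (y * ⟪β - β₀, v⟫)]

theorem ite_inner_nonpos_le_one_sub_ite {E : Type*} [NormedAddCommGroup E]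
    [InnerProductSpace ℝ E] {y R : ℝ} {β β₀ v : E} (hy : |y| ≤ 1) (hβ : ‖β - β₀‖ ≤ R) :
    (if y * ⟪β, v⟫ ≤ 0 then (1 : ℝ) else 0)
      ≤ 1 - if 0 < y * ⟪β₀, v⟫ - ‖v‖ * R then (1 : ℝ) else 0 := by
  split_ifs with herr hmargin
  · exact absurd herr (not_le.2 (mul_inner_pos_of_norm_sub_le hy hβ hmargin))
  all_goals norm_num

theorem div_le_one_sub_div_of_le_sub {a b c : ℝ} (h : a ≤ c - b) (hc : 0 ≤ c) :
    a / c ≤ 1 - b / c := by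
  rcases hc.eq_or_lt with rfl | hc
  · simp
  · rw [one_sub_div hc.ne']
    gcongr

theorem validation_error_bound_from_ball_general {n' d k : ℕ}
    (x' : Fin n' → Fin d → ℝ) (y' : Fin n' → ℝ) (hy : ∀ i, y' i = 1 ∨ y' i = -1)
    (φ : (Fin d → ℝ) → EuclideanSpace ℝ (Fin k))
    (w' : Fin n' → ℝ) (hw : ∀ i, 0 ≤ w' i)
    (hsum : ∑ i, w' i = (n' : ℝ))
    (β₀ : EuclideanSpace ℝ (Fin k)) (R : ℝ)
    (β : EuclideanSpace ℝ (Fin k)) (hβ : ‖β - β₀‖ ≤ R)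
    (ζ : Fin n' → ℝ)
    (hζ : ∀ i, ζ i = if 0 < y' i * ⟪β₀, φ (x' i)⟫ - ‖φ (x' i)‖ * R then (1 : ℝ) else 0) :
    (∑ i, w' i * (if y' i * ⟪β, φ (x' i)⟫ ≤ 0 then (1 : ℝ) else 0)) / (∑ i, w' i)
      ≤ 1 - (∑ i, ζ i * w' i) / (n' : ℝ) := by
  have hlabel : ∀ i, |y' i| ≤ 1 := fun i => by rcases hy i with h | h <;> simp [h]
  have herr : ∀ i, (if y' i * ⟪β, φ (x' i)⟫ ≤ 0 then (1 : ℝ) else 0) ≤ 1 - ζ i := fun i => by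
    rw [hζ i]
    exact ite_inner_nonpos_le_one_sub_ite (hlabel i) hβ
  have hbound : ∑ i, w' i * (if y' i * ⟪β, φ (x' i)⟫ ≤ 0 then (1 : ℝ) else 0)
      ≤ n' - ∑ i, ζ i * w' i :=
    calc _ ≤ ∑ i, w' i * (1 - ζ i) :=
          sum_le_sum fun i _ => mul_le_mul_of_nonneg_left (herr i) (hw i)
      _ = n' - ∑ i, ζ i * w' i := by
          simp only [mul_sub, mul_one, sum_sub_distrib, hsum, mul_comm]
  rw [hsum]
  exact div_le_one_sub_div_of_le_sub hbound n'.cast_nonneg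

/-- validation error bound from a parameter ball via the
surely-correct indicator: in the validation setup with `Σ_i w'_i = n'`, if
`‖β − β₀‖ ≤ R` and `ζ_i = I[y'_i ⟨β₀, φ(x'_i)⟩ − ‖φ(x'_i)‖ R > 0]`, then
`VaEr(β; w') ≤ 1 − (Σ_i ζ_i w'_i)/n'`. -/
theorem validation_error_bound_from_ball {n' d k : ℕ}
    (x' : Fin n' → Fin d → ℝ) (y' : Fin n' → ℝ) (hy : ∀ i, y' i = 1 ∨ y' i = -1)
    (φ : (Fin d → ℝ) → EuclideanSpace ℝ (Fin k))
    (w' : Fin n' → ℝ) (hw : ∀ i, 0 ≤ w' i) (hW : 0 < ∑ i, w' i)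
    (hsum : ∑ i, w' i = (n' : ℝ))
    (β₀ : EuclideanSpace ℝ (Fin k)) (R : ℝ) (hR : 0 ≤ R)
    (β : EuclideanSpace ℝ (Fin k)) (hβ : ‖β - β₀‖ ≤ R)
    (ζ : Fin n' → ℝ)
    (hζ : ∀ i, ζ i = if 0 < y' i * ⟪β₀, φ (x' i)⟫ - ‖φ (x' i)‖ * R then (1 : ℝ) else 0) :
    (∑ i, w' i * (if y' i * ⟪β, φ (x' i)⟫ ≤ 0 then (1 : ℝ) else 0)) / (∑ i, w' i)
      ≤ 1 - (∑ i, ζ i * w' i) / (n' : ℝ) :=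
  validation_error_bound_from_ball_general x' y' hy φ w' hw hsum β₀ R β hβ ζ hζ
end
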